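/- arXiv:2512.13338 — 6 statements merged into one kernel-verified Lean document; each statement's English description precedes it below -/
import Mathlib

section
/- For all integers k ≥ 0, 0 ≤ p ≤ k and all z = (z₁,z₂) ∈ ℂ², the real Fréchet derivative of φ_{k,p} at z in the direction (−i·conj(z₂), i·conj(z₁)) equals i·p·φ_{k,p−1}(z) + i·(k−p)·φ_{k,p+1}(z). (This is the formula Y₃(φ_{k,p}) = ip·φ_{k,p−1} + i(k−p)·φ_{k,p+1} for the Killing vector field Y₃(z) = (−i·conj(z₂), i·conj(z₁)) on the round 3-sphere.) -/
/-- The spherical harmonic `φ_{k,p} = u^p v^{k−p}` with `u = a z₁ + b z₂` and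
`v = b conj z₁ − a conj z₂`, extended by `0` when `p < 0` or `p > k`. -/
noncomputable def phi (a b : ℂ) (k p : ℤ) (z : ℂ × ℂ) : ℂ :=
  if 0 ≤ p ∧ p ≤ k then
    (a * z.1 + b * z.2) ^ p.toNat *
      (b * (starRingEnd ℂ) z.1 - a * (starRingEnd ℂ) z.2) ^ (k - p).toNat
  else 0

lemma key (a b : ℂ) (m n : ℕ) (z w : ℂ × ℂ) :
    fderiv ℝ (fun z : ℂ × ℂ =>
        (a * z.1 + b * z.2) ^ m *
          (b * (starRingEnd ℂ) z.1 - a * (starRingEnd ℂ) z.2) ^ n) z w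
      = (m : ℂ) * (a * z.1 + b * z.2) ^ (m - 1) *
          (b * (starRingEnd ℂ) z.1 - a * (starRingEnd ℂ) z.2) ^ n * (a * w.1 + b * w.2)
        + (n : ℂ) * (a * z.1 + b * z.2) ^ m *
          (b * (starRingEnd ℂ) z.1 - a * (starRingEnd ℂ) z.2) ^ (n - 1) *
          (b * (starRingEnd ℂ) w.1 - a * (starRingEnd ℂ) w.2) := by
  have hconj : ∀ x : ℂ, HasFDerivAt (starRingEnd ℂ)
      (Complex.conjCLE.toContinuousLinearMap) x :=
    fun x => Complex.conjCLE.toContinuousLinearMap.hasFDerivAt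
  have h1 : HasFDerivAt (fun z : ℂ × ℂ => (starRingEnd ℂ) z.1)
      (Complex.conjCLE.toContinuousLinearMap.comp (ContinuousLinearMap.fst ℝ ℂ ℂ)) z :=
    (hconj z.1).comp z (hasFDerivAt_fst)
  have h2 : HasFDerivAt (fun z : ℂ × ℂ => (starRingEnd ℂ) z.2)
      (Complex.conjCLE.toContinuousLinearMap.comp (ContinuousLinearMap.snd ℝ ℂ ℂ)) z :=
    (hconj z.2).comp z (hasFDerivAt_snd)
  have hu : HasFDerivAt (fun z : ℂ × ℂ => a * z.1 + b * z.2) _ z :=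
    ((hasFDerivAt_fst (𝕜 := ℝ) (p := z)).const_mul a).add
      ((hasFDerivAt_snd (𝕜 := ℝ) (p := z)).const_mul b)
  have hv : HasFDerivAt (fun z : ℂ × ℂ =>
      b * (starRingEnd ℂ) z.1 - a * (starRingEnd ℂ) z.2) _ z :=
    (h1.const_mul b).sub (h2.const_mul a)
  have hum := (hasDerivAt_pow m (a * z.1 + b * z.2)).comp_hasFDerivAt z hu
  have hvn := (hasDerivAt_pow n (b * (starRingEnd ℂ) z.1 - a * (starRingEnd ℂ) z.2)).comp_hasFDerivAt z hv
  have hf := hum.mul hvn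
  simp only [Function.comp_def] at hf
  rw [HasFDerivAt.fderiv (f := fun z : ℂ × ℂ =>
      (a * z.1 + b * z.2) ^ m *
        (b * (starRingEnd ℂ) z.1 - a * (starRingEnd ℂ) z.2) ^ n) hf]
  simp [ContinuousLinearMap.smul_apply, ContinuousLinearMap.add_apply,
    ContinuousLinearMap.comp_apply, smul_eq_mul]
  ring

/-- `Y₃(φ_{k,p}) = i p φ_{k,p−1} + i (k−p) φ_{k,p+1}` for the Killing vector field
`Y₃(z) = (−i conj z₂, i conj z₁)` on the round 3-sphere. -/
theorem stmt3 (a b : ℂ) (k p : ℕ) (hpk : p ≤ k) (z : ℂ × ℂ) :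
    fderiv ℝ (phi a b (k : ℤ) (p : ℤ)) z
        (-Complex.I * (starRingEnd ℂ) z.2, Complex.I * (starRingEnd ℂ) z.1) =
      Complex.I * (p : ℂ) * phi a b (k : ℤ) ((p : ℤ) - 1) z +
        Complex.I * ((k : ℂ) - (p : ℂ)) * phi a b (k : ℤ) ((p : ℤ) + 1) z := by
  have hrw : phi a b (k : ℤ) (p : ℤ) = fun z : ℂ × ℂ =>
      (a * z.1 + b * z.2) ^ p *
        (b * (starRingEnd ℂ) z.1 - a * (starRingEnd ℂ) z.2) ^ (k - p) := by
    funext w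
    rw [phi, if_pos ⟨Int.ofNat_nonneg p, by exact_mod_cast hpk⟩]
    have h1 : ((k:ℤ) - (p:ℤ)).toNat = k - p := by omega
    rw [h1, Int.toNat_natCast]
  rw [hrw, key]
  have hw1 : a * (-Complex.I * (starRingEnd ℂ) z.2) + b * (Complex.I * (starRingEnd ℂ) z.1)
      = Complex.I * (b * (starRingEnd ℂ) z.1 - a * (starRingEnd ℂ) z.2) := by ring
  have hw2 : b * (starRingEnd ℂ) (-Complex.I * (starRingEnd ℂ) z.2)
        - a * (starRingEnd ℂ) (Complex.I * (starRingEnd ℂ) z.1)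
      = Complex.I * (a * z.1 + b * z.2) := by
    simp only [map_mul, map_neg, Complex.conj_I, Complex.conj_conj]
    ring
  simp only [hw1, hw2]
  set U := a * z.1 + b * z.2
  set V := b * (starRingEnd ℂ) z.1 - a * (starRingEnd ℂ) z.2
  rcases Nat.eq_zero_or_pos p with hp0 | hp0
  · subst hp0
    rcases Nat.eq_zero_or_pos k with hk0 | hk0
    · subst hk0; simp [phi]
    · obtain ⟨r, rfl⟩ : ∃ r, k = r + 1 := ⟨k - 1, by omega⟩
      rw [phi, if_neg (by omega), phi, if_pos (by constructor <;> omega)]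
      have e2 : (((0:ℕ):ℤ) + 1).toNat = 1 := by omega
      have e3 : (((r:ℕ)+1:ℕ):ℤ) - (((0:ℕ):ℤ) + 1) = (r:ℤ) := by push_cast; ring
      rw [e2, e3]
      simp only [Int.toNat_natCast, Int.toNat_natCast, Nat.sub_zero, Nat.add_sub_cancel,
        Nat.cast_zero, pow_zero, pow_one, pow_succ]
      push_cast
      ring
  · obtain ⟨q, rfl⟩ : ∃ q, p = q + 1 := ⟨p - 1, by omega⟩
    rcases Nat.lt_or_ge (q+1) k with hpk' | hpk'
    · obtain ⟨r, rfl⟩ : ∃ r, k = (q + 1) + (r + 1) := ⟨k - (q+1) - 1, by omega⟩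
      rw [phi, if_pos (by constructor <;> omega), phi, if_pos (by constructor <;> omega)]
      have e1 : (((q+1:ℕ):ℤ) - 1).toNat = q := by omega
      have e2 : ((((q+1)+(r+1):ℕ):ℤ) - (((q+1:ℕ):ℤ) - 1)).toNat = r + 2 := by omega
      have e3 : (((q+1:ℕ):ℤ) + 1).toNat = q + 2 := by omega
      have e4 : ((((q+1)+(r+1):ℕ):ℤ) - (((q+1:ℕ):ℤ) + 1)).toNat = r := by omega
      have e5 : (q + 1) + (r + 1) - (q + 1) = r + 1 := by omega
      rw [e1, e2, e3, e4, e5]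
      simp only [pow_succ]
      push_cast
      ring
    · have hpk2 : q + 1 = k := le_antisymm hpk hpk'
      subst hpk2
      rw [phi, if_pos (by constructor <;> omega), phi, if_neg (by omega)]
      have e1 : (((q+1:ℕ):ℤ) - 1).toNat = q := by omega
      have e2 : (((q+1:ℕ):ℤ) - (((q+1:ℕ):ℤ) - 1)).toNat = 1 := by omega
      rw [e1, e2]
      have e3 : q + 1 - 1 = q := by omega
      have e4 : q + 1 - (q + 1) = 0 := by omega
      rw [e3, e4]
      simp only [Nat.zero_sub, pow_zero, pow_one, Nat.cast_zero]
      push_cast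
      ring
end

section
/- For all integers k ≥ 0, 0 ≤ p ≤ k and all z = (z₁,z₂) ∈ ℂ², the real Fréchet derivative of φ_{k,p} at z in the direction (conj(z₂), −conj(z₁)) equals −p·φ_{k,p−1}(z) + (k−p)·φ_{k,p+1}(z). (This is the formula Y₄(φ_{k,p}) = −p·φ_{k,p−1} + (k−p)·φ_{k,p+1} for the Killing vector field Y₄(z) = (conj(z₂), −conj(z₁)) on the round 3-sphere.) -/
private lemma myPow {f : ℂ × ℂ → ℂ} {f' : ℂ × ℂ →L[ℝ] ℂ} {x : ℂ × ℂ}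
    (hf : HasFDerivAt f f' x) (n : ℕ) :
    HasFDerivAt (fun y => f y ^ n) (((n : ℂ) * f x ^ (n - 1)) • f') x := by
  induction n with
  | zero =>
    have h0 : (((0 : ℕ) : ℂ) * f x ^ (0 - 1)) • f' = 0 := by
      rw [show ((0 : ℕ) : ℂ) * f x ^ (0 - 1) = 0 by norm_num]
      exact zero_smul ℂ f'
    rw [h0]
    simpa using hasFDerivAt_const (1 : ℂ) x
  | succ n ih =>
    have h := ih.mul hf
    have heq : (fun y => f y ^ n * f y) = fun y => f y ^ (n + 1) := by
      funext y; rw [← pow_succ]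
    rw [show ((fun y => f y ^ n) * f) = fun y => f y ^ n * f y from rfl, heq] at h
    have hs : (((n + 1 : ℕ) : ℂ) * f x ^ (n + 1 - 1)) • f'
        = f x ^ n • f' + f x • ((n : ℂ) * f x ^ (n - 1)) • f' := by
      have key : ((n + 1 : ℕ) : ℂ) * f x ^ (n + 1 - 1)
          = f x ^ n + f x * ((n : ℂ) * f x ^ (n - 1)) := by
        rcases n with _ | m
        · norm_num
        · rw [Nat.add_sub_cancel, Nat.add_sub_cancel]
          push_cast
          ring
      rw [key]; module
    rw [hs]
    exact h

/-- `Y₄(φ_{k,p}) = −p φ_{k,p−1} + (k−p) φ_{k,p+1}` for the Killing vector field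
`Y₄(z) = (conj z₂, −conj z₁)` on the round 3-sphere. -/
theorem stmt4 (a b : ℂ) (k p : ℕ) (hpk : p ≤ k) (z : ℂ × ℂ) :
    fderiv ℝ (phi a b (k : ℤ) (p : ℤ)) z
        ((starRingEnd ℂ) z.2, -(starRingEnd ℂ) z.1) =
      -(p : ℂ) * phi a b (k : ℤ) ((p : ℤ) - 1) z +
        ((k : ℂ) - (p : ℂ)) * phi a b (k : ℤ) ((p : ℤ) + 1) z := by
  obtain ⟨d, rfl⟩ : ∃ d, k = p + d := ⟨k - p, by omega⟩
  set u : ℂ × ℂ → ℂ := fun z => a * z.1 + b * z.2 with hu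
  set v : ℂ × ℂ → ℂ := fun z => b * (starRingEnd ℂ) z.1 - a * (starRingEnd ℂ) z.2 with hv
  set Lu : ℂ × ℂ →L[ℝ] ℂ :=
    ((a • ContinuousLinearMap.fst ℂ ℂ ℂ + b • ContinuousLinearMap.snd ℂ ℂ ℂ)).restrictScalars ℝ
    with hLu
  set conjC : ℂ →L[ℝ] ℂ := Complex.conjCLE.toContinuousLinearMap with hconjC
  set Lv : ℂ × ℂ →L[ℝ] ℂ :=
    b • (conjC.comp (ContinuousLinearMap.fst ℝ ℂ ℂ))
      - a • (conjC.comp (ContinuousLinearMap.snd ℝ ℂ ℂ)) with hLv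
  have hU : HasFDerivAt u Lu z := by
    have : u = ⇑Lu := by funext w; simp [hu, hLu, smul_eq_mul]
    rw [this]; exact Lu.hasFDerivAt
  have hV : HasFDerivAt v Lv z := by
    have : v = ⇑Lv := by funext w; simp [hv, hLv, hconjC, smul_eq_mul]
    rw [this]; exact Lv.hasFDerivAt
  have phiNat : ∀ (k' p' : ℕ), p' ≤ k' →
      phi a b (k' : ℤ) (p' : ℤ) = fun w => u w ^ p' * v w ^ (k' - p') := by
    intro k' p' h
    funext w
    have h2 : ((k' : ℤ) - (p' : ℤ)).toNat = k' - p' := by omega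
    have hc : (0 ≤ (p' : ℤ) ∧ (p' : ℤ) ≤ (k' : ℤ)) := by omega
    simp only [phi, if_pos hc, Int.toNat_natCast, h2, hu, hv]
  have hphi : phi a b ((p + d : ℕ) : ℤ) (p : ℤ) = fun w => u w ^ p * v w ^ d :=
    by rw [phiNat _ _ (by omega)]; simp
  have hF : HasFDerivAt (fun w => u w ^ p * v w ^ d)
      ((u z ^ p) • (((d : ℂ) * v z ^ (d - 1)) • Lv)
        + (v z ^ d) • (((p : ℂ) * u z ^ (p - 1)) • Lu)) z :=
    (myPow hU p).mul (myPow hV d)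
  rw [hphi, hF.fderiv]
  have hLuw : Lu ((starRingEnd ℂ) z.2, -(starRingEnd ℂ) z.1) = -(v z) := by
    simp [hLu, hv, smul_eq_mul]; ring
  have hLvw : Lv ((starRingEnd ℂ) z.2, -(starRingEnd ℂ) z.1) = u z := by
    simp [hLv, hconjC, hu, smul_eq_mul]; ring
  simp only [ContinuousLinearMap.add_apply, ContinuousLinearMap.smul_apply, smul_eq_mul,
    hLuw, hLvw]
  rcases Nat.eq_zero_or_pos p with rfl | hp <;> rcases Nat.eq_zero_or_pos d with rfl | hd
  · simp [phi]
  · obtain ⟨e, rfl⟩ : ∃ e, d = e + 1 := ⟨d - 1, by omega⟩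
    have r2 : ((0 : ℕ) : ℤ) + 1 = ((1 : ℕ) : ℤ) := by omega
    rw [r2, phiNat _ _ (by omega)]
    have hz : phi a b ((0 + (e + 1) : ℕ) : ℤ) (((0 : ℕ) : ℤ) - 1) z = 0 := by
      simp only [phi]; rw [if_neg (by omega)]
    rw [hz]
    have he : 0 + (e + 1) - 1 = e := by omega
    rw [he]
    simp only [hu, hv]
    push_cast
    ring
  · obtain ⟨q, rfl⟩ : ∃ q, p = q + 1 := ⟨p - 1, by omega⟩
    have r1 : ((q + 1 : ℕ) : ℤ) - 1 = ((q : ℕ) : ℤ) := by omega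
    rw [r1, phiNat _ _ (by omega)]
    have hz : phi a b ((q + 1 + 0 : ℕ) : ℤ) (((q + 1 : ℕ) : ℤ) + 1) z = 0 := by
      simp only [phi]; rw [if_neg (by omega)]
    rw [hz]
    have he : q + 1 + 0 - q = 1 := by omega
    rw [he]
    simp only [hu, hv]
    push_cast
    ring
  · obtain ⟨q, rfl⟩ : ∃ q, p = q + 1 := ⟨p - 1, by omega⟩
    obtain ⟨e, rfl⟩ : ∃ e, d = e + 1 := ⟨d - 1, by omega⟩
    have r1 : ((q + 1 : ℕ) : ℤ) - 1 = ((q : ℕ) : ℤ) := by omega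
    have r2 : ((q + 1 : ℕ) : ℤ) + 1 = ((q + 2 : ℕ) : ℤ) := by omega
    rw [r1, r2, phiNat _ _ (show q ≤ q + 1 + (e + 1) by omega),
      phiNat _ _ (show q + 2 ≤ q + 1 + (e + 1) by omega)]
    have he1 : q + 1 + (e + 1) - q = e + 2 := by omega
    have he2 : q + 1 + (e + 1) - (q + 2) = e := by omega
    rw [he1, he2]
    simp only [hu, hv]
    push_cast
    ring
end

section
/- For all integers k ≥ 0 and 0 ≤ p ≤ k, the function φ_{k,p} is harmonic on ℂ² ≅ ℝ⁴: for every z ∈ ℂ² and every orthonormal ℝ-basis (e₁, e₂, e₃, e₄) of ℂ² (with respect to the real inner product Re(w₁·conj(z₁) + w₂·conj(z₂))), the sum over j = 1,…,4 of the second real Fréchet derivative D²φ_{k,p}(z)[e_j, e_j] vanishes. Hence the restrictions of the φ_{k,p} to the unit sphere 𝕊³ are spherical harmonics (restrictions of harmonic polynomials homogeneous of degree k). -/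
/-- The real inner product on `ℂ × ℂ ≅ ℝ⁴`: `⟨w,z⟩ = Re (w₁ conj z₁ + w₂ conj z₂)`. -/
noncomputable def rinner (w z : ℂ × ℂ) : ℝ :=
  (w.1 * (starRingEnd ℂ) z.1 + w.2 * (starRingEnd ℂ) z.2).re

/-- `u` as a continuous ℝ-linear map. -/
noncomputable def Umap (a b : ℂ) : (ℂ × ℂ) →L[ℝ] ℂ :=
  a • (ContinuousLinearMap.fst ℝ ℂ ℂ) + b • (ContinuousLinearMap.snd ℝ ℂ ℂ)

/-- `v` as a continuous ℝ-linear map. -/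
noncomputable def Vmap (a b : ℂ) : (ℂ × ℂ) →L[ℝ] ℂ :=
  b • (Complex.conjCLE.toContinuousLinearMap.comp (ContinuousLinearMap.fst ℝ ℂ ℂ)) -
    a • (Complex.conjCLE.toContinuousLinearMap.comp (ContinuousLinearMap.snd ℝ ℂ ℂ))

@[simp] lemma Umap_apply (a b : ℂ) (w : ℂ × ℂ) : Umap a b w = a * w.1 + b * w.2 := by
  simp [Umap, smul_eq_mul]

@[simp] lemma Vmap_apply (a b : ℂ) (w : ℂ × ℂ) :
    Vmap a b w = b * (starRingEnd ℂ) w.1 - a * (starRingEnd ℂ) w.2 := by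
  simp [Vmap, smul_eq_mul, Complex.conjCLE_apply]

/-- derivative of a power of a function. -/
lemma hasFDerivAt_pow_comp {f : ℂ × ℂ → ℂ} {f' : (ℂ × ℂ) →L[ℝ] ℂ} {x : ℂ × ℂ}
    (hf : HasFDerivAt f f' x) :
    ∀ n : ℕ, HasFDerivAt (fun y => f y ^ n) (((n : ℂ) * f x ^ (n - 1)) • f') x
  | 0 => by
    have h0 : HasFDerivAt (fun _ : ℂ × ℂ => (1 : ℂ)) (0 : (ℂ × ℂ) →L[ℝ] ℂ) x :=
      hasFDerivAt_const 1 x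
    have hz : (((0 : ℕ) : ℂ) * f x ^ (0 - 1)) • f' = (0 : (ℂ × ℂ) →L[ℝ] ℂ) := by
      refine ContinuousLinearMap.ext fun w => ?_; simp
    rw [hz]
    exact h0
  | (n + 1) => by
    have h := hf.fun_mul (hasFDerivAt_pow_comp hf n)
    have : (fun y => f y * f y ^ n) = fun y => f y ^ (n + 1) := by
      funext y; rw [pow_succ']
    rw [this] at h
    have hE : f x • ((n : ℂ) * f x ^ (n - 1)) • f' + f x ^ n • f'
        = (((n + 1 : ℕ) : ℂ) * f x ^ (n + 1 - 1)) • f' := by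
      refine ContinuousLinearMap.ext fun w => ?_
      simp only [ContinuousLinearMap.add_apply, ContinuousLinearMap.smul_apply, smul_eq_mul]
      cases n with
      | zero => simp
      | succ m =>
        push_cast
        ring
    rwa [hE] at h

/-- standard ℝ-basis of ℂ². -/
noncomputable def f4 : Fin 4 → ℂ × ℂ := ![(1, 0), (Complex.I, 0), (0, 1), (0, Complex.I)]

lemma sum_ortho (L M : (ℂ × ℂ) →L[ℝ] ℂ) (e : Fin 4 → ℂ × ℂ)
    (he : ∀ i j : Fin 4, rinner (e i) (e j) = if i = j then 1 else 0) :
    ∑ j : Fin 4, L (e j) * M (e j) = ∑ i : Fin 4, L (f4 i) * M (f4 i) := by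
  set c : Matrix (Fin 4) (Fin 4) ℝ :=
    fun j i => ![(e j).1.re, (e j).1.im, (e j).2.re, (e j).2.im] i with hc
  have hce : ∀ j, e j = ∑ i : Fin 4, c j i • f4 i := by
    intro j
    refine Prod.ext ?_ ?_ <;>
      simp [Fin.sum_univ_four, hc, f4, Complex.real_smul, Complex.re_add_im]
  have hrow : c * Matrix.transpose c = 1 := by
    ext j j'
    simp only [Matrix.mul_apply, Matrix.transpose_apply]
    have h := he j j'
    simp only [rinner, Complex.add_re, Complex.mul_re, Complex.conj_re, Complex.conj_im] at h
    simp only [Matrix.mul_apply, Matrix.transpose_apply, Fin.sum_univ_four, hc,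
      Matrix.one_apply]
    rw [← h]
    norm_num [Matrix.cons_val_zero, Matrix.cons_val_one, Matrix.cons_val]
    simp [Matrix.vecHead, Matrix.vecTail]; ring
  have hcol : Matrix.transpose c * c = 1 := mul_eq_one_comm.mp hrow
  have hsum : ∀ i i' : Fin 4, (∑ j : Fin 4, c j i * c j i') = if i = i' then 1 else 0 := by
    intro i i'
    have := congrFun (congrFun hcol i) i'
    simpa [Matrix.mul_apply, Matrix.transpose_apply, Matrix.one_apply] using this
  calc ∑ j : Fin 4, L (e j) * M (e j)
      = ∑ j : Fin 4, ∑ i : Fin 4, ∑ i' : Fin 4,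
          (c j i * c j i') • (L (f4 i) * M (f4 i')) := by
        refine Finset.sum_congr rfl fun j _ => ?_
        rw [hce j, map_sum, map_sum, Finset.sum_mul_sum]
        refine Finset.sum_congr rfl fun i _ => Finset.sum_congr rfl fun i' _ => ?_
        simp only [map_smul, Complex.real_smul, smul_eq_mul]
        push_cast
        ring
    _ = ∑ i : Fin 4, ∑ i' : Fin 4,
          (∑ j : Fin 4, c j i * c j i') • (L (f4 i) * M (f4 i')) := by
        rw [Finset.sum_comm]
        refine Finset.sum_congr rfl fun i _ => ?_
        rw [Finset.sum_comm]
        refine Finset.sum_congr rfl fun i' _ => ?_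
        rw [Finset.sum_smul]
    _ = ∑ i : Fin 4, L (f4 i) * M (f4 i) := by
        simp [hsum, ite_smul]

lemma sum_f4 (a b : ℂ) :
    (∑ i : Fin 4, Umap a b (f4 i) * Umap a b (f4 i)) = 0 ∧
    (∑ i : Fin 4, Umap a b (f4 i) * Vmap a b (f4 i)) = 0 ∧
    (∑ i : Fin 4, Vmap a b (f4 i) * Vmap a b (f4 i)) = 0 := by
  have hI : Complex.I * Complex.I = -1 := Complex.I_mul_I
  refine ⟨?_, ?_, ?_⟩ <;>
    · simp only [Fin.sum_univ_four, f4, Umap_apply, Vmap_apply, Matrix.cons_val_zero,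
        Matrix.cons_val_one, Matrix.head_cons, Matrix.cons_val_two, Matrix.tail_cons,
        Matrix.cons_val_three, map_one, map_zero, Complex.conj_I, mul_zero, mul_one,
        add_zero, zero_add, sub_zero, zero_sub]
      first
      | ring1
      | linear_combination (a * a + b * b) * hI
      | linear_combination (-(a * a) - b * b) * hI
      | linear_combination (-(a * a) - b * b) * hI

/-- `φ_{k,p}` is harmonic on `ℂ² ≅ ℝ⁴`: for every `z` and every orthonormal ℝ-basis
`(e₁,e₂,e₃,e₄)` of `ℂ²` (w.r.t. the real inner product), the sum of the second real
Fréchet derivatives `D²φ_{k,p}(z)[e_j,e_j]` vanishes. -/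
theorem stmt5 (a b : ℂ) (k p : ℕ) (hpk : p ≤ k) (z : ℂ × ℂ)
    (e : Fin 4 → ℂ × ℂ)
    (he : ∀ i j : Fin 4, rinner (e i) (e j) = if i = j then 1 else 0) :
    ∑ j : Fin 4,
        fderiv ℝ (fun w => fderiv ℝ (phi a b (k : ℤ) (p : ℤ)) w (e j)) z (e j) = 0 := by
  set U := Umap a b with hUdef
  set V := Vmap a b with hVdef
  set q := k - p with hqdef
  -- phi is u^p v^q
  have hphi : phi a b (k : ℤ) (p : ℤ) = fun w => U w ^ p * V w ^ q := by
    funext w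
    have h1 : ((p : ℤ)).toNat = p := Int.toNat_natCast p
    have h2 : ((k : ℤ) - (p : ℤ)).toNat = q := by omega
    simp [phi, h1, h2, Int.ofNat_le.mpr hpk, hUdef, hVdef]
  have hU : ∀ x : ℂ × ℂ, HasFDerivAt (fun y : ℂ × ℂ => U y) U x := fun x => U.hasFDerivAt
  have hV : ∀ x : ℂ × ℂ, HasFDerivAt (fun y : ℂ × ℂ => V y) V x := fun x => V.hasFDerivAt
  -- first derivative everywhere
  have hD1 : ∀ x : ℂ × ℂ, HasFDerivAt (phi a b (k : ℤ) (p : ℤ))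
      ((U x ^ p) • (((q : ℂ) * V x ^ (q - 1)) • V)
        + (V x ^ q) • (((p : ℂ) * U x ^ (p - 1)) • U)) x := by
    intro x
    rw [hphi]
    exact (hasFDerivAt_pow_comp (hU x) p).mul (hasFDerivAt_pow_comp (hV x) q)
  have hfd : ∀ x w : ℂ × ℂ, fderiv ℝ (phi a b (k : ℤ) (p : ℤ)) x w
      = U x ^ p * ((q : ℂ) * V x ^ (q - 1) * V w)
        + V x ^ q * ((p : ℂ) * U x ^ (p - 1) * U w) := by
    intro x w
    rw [(hD1 x).fderiv]
    simp [smul_eq_mul, mul_assoc]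
  -- second derivative terms
  have hval : ∀ j : Fin 4,
      fderiv ℝ (fun w => fderiv ℝ (phi a b (k : ℤ) (p : ℤ)) w (e j)) z (e j)
      = ((p : ℂ) * ((p - 1 : ℕ) : ℂ) * U z ^ (p - 1 - 1) * V z ^ q) * (U (e j) * U (e j))
        + (2 * (p : ℂ) * (q : ℂ) * U z ^ (p - 1) * V z ^ (q - 1)) * (U (e j) * V (e j))
        + ((q : ℂ) * ((q - 1 : ℕ) : ℂ) * U z ^ p * V z ^ (q - 1 - 1)) * (V (e j) * V (e j)) := by
    intro j
    have hrw : (fun w => fderiv ℝ (phi a b (k : ℤ) (p : ℤ)) w (e j))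
        = fun w => ((q : ℂ) * V (e j)) * (U w ^ p * V w ^ (q - 1))
          + ((p : ℂ) * U (e j)) * (U w ^ (p - 1) * V w ^ q) := by
      funext w
      rw [hfd w (e j)]
      ring
    rw [hrw]
    have h2a := ((hasFDerivAt_pow_comp (hU z) p).fun_mul
      (hasFDerivAt_pow_comp (hV z) (q - 1))).const_mul ((q : ℂ) * V (e j))
    have h2b := ((hasFDerivAt_pow_comp (hU z) (p - 1)).fun_mul
      (hasFDerivAt_pow_comp (hV z) q)).const_mul ((p : ℂ) * U (e j))
    rw [(h2a.fun_add h2b).fderiv]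
    simp only [ContinuousLinearMap.add_apply, ContinuousLinearMap.smul_apply, smul_eq_mul]
    ring
  simp only [hval]
  rw [Finset.sum_add_distrib, Finset.sum_add_distrib, ← Finset.mul_sum, ← Finset.mul_sum,
    ← Finset.mul_sum, sum_ortho U U e he, sum_ortho U V e he, sum_ortho V V e he]
  have h1 : (∑ i : Fin 4, U (f4 i) * U (f4 i)) = 0 := (sum_f4 a b).1
  have h2 : (∑ i : Fin 4, U (f4 i) * V (f4 i)) = 0 := (sum_f4 a b).2.1
  have h3 : (∑ i : Fin 4, V (f4 i) * V (f4 i)) = 0 := (sum_f4 a b).2.2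
  rw [h1, h2, h3]
  ring
end

section
/- For every t ∈ ℝ and every s ∈ Spec(t), one has |s| ≥ 3/2 − |t|. (This verifies, for the round 3-sphere with magnetic field tη, the magnetic Hijazi inequality |λ^{tη}| ≥ √(n/(4(n−1)) · Y(𝕊³)) / Vol^{1/n} − ‖tη‖, whose right-hand side equals 3/2 − |t| after normalization.) -/
/-!
The eigenvalues `3/2 + k ± t` are at least `3/2 - |t|` since `k ≥ 0`. For the other two families,
`p < k` gives `f₀(k,p,t) ≥ 4(k - p)(p + 1) ≥ 4`, so `|1/2 ± √f₀| ≥ √f₀ - 1/2 ≥ 3/2`,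
independently of `t`.
-/

/-- `f₀(k,p,t) = (1 + t + 2p − k)² + 4(k − p)(p + 1)`. -/
noncomputable def f0 (k p : ℤ) (t : ℝ) : ℝ :=
  (1 + t + 2 * (p : ℝ) - (k : ℝ)) ^ 2 + 4 * ((k : ℝ) - (p : ℝ)) * ((p : ℝ) + 1)

/-- The spectrum of the magnetic Dirac operator `D^{tη}` on the round 3-sphere of
sectional curvature 1, where `η` is the Reeb one-form of the Hopf fibration. -/
noncomputable def Spec (t : ℝ) : Set ℝ :=
  {s | ∃ k : ℕ, s = 3 / 2 + (k : ℝ) + t} ∪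
    {s | ∃ k : ℕ, s = 3 / 2 + (k : ℝ) - t} ∪
    {s | ∃ k p : ℕ, p < k ∧ s = 1 / 2 + Real.sqrt (f0 (k : ℤ) (p : ℤ) t)} ∪
    {s | ∃ k p : ℕ, p < k ∧ s = 1 / 2 - Real.sqrt (f0 (k : ℤ) (p : ℤ) t)}

lemma four_le_f0 {k p : ℤ} (hp : 0 ≤ p) (hpk : p < k) (t : ℝ) : 4 ≤ f0 k p t := by
  have hkp : (1 : ℝ) ≤ k - p := by exact_mod_cast Int.sub_pos_of_lt hpk
  have hp1 : (1 : ℝ) ≤ p + 1 := by linarith [(by exact_mod_cast hp : (0 : ℝ) ≤ p)]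
  unfold f0
  nlinarith [sq_nonneg (1 + t + 2 * (p : ℝ) - k), mul_le_mul hkp hp1 zero_le_one (by linarith)]

lemma two_le_sqrt_f0 {k p : ℤ} (hp : 0 ≤ p) (hpk : p < k) (t : ℝ) : 2 ≤ √(f0 k p t) :=
  Real.le_sqrt_of_sq_le (by linarith [four_le_f0 hp hpk t])

lemma sub_abs_le_abs_add (c t : ℝ) : c - |t| ≤ |c + t| := by
  linarith [le_abs_self (c + t), neg_abs_le t]

lemma sub_abs_le_abs_sub (c t : ℝ) : c - |t| ≤ |c - t| := by
  linarith [le_abs_self (c - t), le_abs_self t]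

lemma three_halves_le_abs_half_add {r : ℝ} (hr : 2 ≤ r) : 3 / 2 ≤ |1 / 2 + r| := by
  linarith [le_abs_self (1 / 2 + r)]

lemma three_halves_le_abs_half_sub {r : ℝ} (hr : 2 ≤ r) : 3 / 2 ≤ |1 / 2 - r| := by
  linarith [neg_abs_le (1 / 2 - r)]

/-- Every element `s` of the magnetic Dirac spectrum of the round 3-sphere satisfies
`|s| ≥ 3/2 − |t|` (the magnetic Hijazi inequality on `𝕊³`). -/
theorem stmt10 (t : ℝ) : ∀ s ∈ Spec t, 3 / 2 - |t| ≤ |s| := by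
  rintro s (((⟨k, rfl⟩ | ⟨k, rfl⟩) | ⟨k, p, hpk, rfl⟩) | ⟨k, p, hpk, rfl⟩)
  · linarith [sub_abs_le_abs_add (3 / 2 + k) t, k.cast_nonneg (α := ℝ)]
  · linarith [sub_abs_le_abs_sub (3 / 2 + k) t, k.cast_nonneg (α := ℝ)]
  · linarith [three_halves_le_abs_half_add (two_le_sqrt_f0 (Int.natCast_nonneg p)
      (Int.ofNat_lt.mpr hpk) t), abs_nonneg t]
  · linarith [three_halves_le_abs_half_sub (two_le_sqrt_f0 (Int.natCast_nonneg p)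
      (Int.ofNat_lt.mpr hpk) t), abs_nonneg t]
end

section
/- For every t ∈ ℝ with |t| ≥ 3/2, there exists s ∈ Spec(t) with |s| ≤ 1/2. (Thus the smallest magnetic Dirac eigenvalue of the round 3-sphere in absolute value satisfies |λ^{tη}| ≤ 1/2 for all |t| ≥ 3/2, and the equality case of the magnetic Hijazi inequality |λ₁^{tη}| + |t| = 3/2 fails for |t| > 3/2.) -/
/-!
The two branches `3/2 + k ± t` of `Spec t` are arithmetic progressions of step `1`.
When `|t| ≥ 3/2` one of them starts at `3/2 - |t| ≤ 0`, so one of its terms lies in `[-1/2, 1/2]`.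
-/

lemma exists_nat_abs_add_sub_le_half {a x : ℝ} (h : a ≤ x + 1 / 2) :
    ∃ k : ℕ, |a + k - x| ≤ 1 / 2 := by
  refine ⟨⌊x - a + 1 / 2⌋₊, abs_le.2 ⟨?_, ?_⟩⟩
  · linarith [Nat.lt_floor_add_one (x - a + 1 / 2)]
  · linarith [Nat.floor_le (show 0 ≤ x - a + 1 / 2 by linarith)]

lemma three_halves_add_add_mem_Spec (t : ℝ) (k : ℕ) : 3 / 2 + (k : ℝ) + t ∈ Spec t :=
  Or.inl <| Or.inl <| Or.inl ⟨k, rfl⟩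

lemma three_halves_add_sub_mem_Spec (t : ℝ) (k : ℕ) : 3 / 2 + (k : ℝ) - t ∈ Spec t :=
  Or.inl <| Or.inl <| Or.inr ⟨k, rfl⟩

/-- For every `t` with `|t| ≥ 3/2` there exists `s ∈ Spec t` with `|s| ≤ 1/2`. -/
theorem stmt12 (t : ℝ) (ht : 3 / 2 ≤ |t|) : ∃ s ∈ Spec t, |s| ≤ 1 / 2 := by
  rcases le_or_gt 0 t with ht₀ | ht₀
  · obtain ⟨k, hk⟩ := exists_nat_abs_add_sub_le_half (a := 3 / 2) (x := t)
      (by linarith [abs_of_nonneg ht₀])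
    exact ⟨_, three_halves_add_sub_mem_Spec t k, hk⟩
  · obtain ⟨k, hk⟩ := exists_nat_abs_add_sub_le_half (a := 3 / 2) (x := -t)
      (by linarith [abs_of_neg ht₀])
    rw [sub_neg_eq_add] at hk
    exact ⟨_, three_halves_add_add_mem_Spec t k, hk⟩
end

section
/- For every real number t ≠ 0 there exists s ∈ Spec(t) with |s| < 3/2. (Since 3/2 is the smallest element of {|s| : s ∈ Spec(0)}, i.e. the smallest Dirac eigenvalue of the round 3-sphere in absolute value, this shows that the inequality |λ₁^{tη}| < |λ₁| holds for every nonzero t, so the diamagnetic inequality fails on the round 3-sphere for every nonzero magnetic field tη.) -/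
/-! For `t ≠ 0` one of the two linear branches `3/2 + k ± t` already works: with `u = |t| > 0`
and `k = ⌈u⌉ - 1`, the eigenvalue `3/2 + k - u` lies in `[1/2, 3/2)`. -/

lemma exists_nat_abs_three_halves_add_sub_lt {u : ℝ} (hu : 0 < u) :
    ∃ k : ℕ, |3 / 2 + (k : ℝ) - u| < 3 / 2 := by
  refine ⟨⌈u⌉₊ - 1, ?_⟩
  have hcast : ((⌈u⌉₊ - 1 : ℕ) : ℝ) = ⌈u⌉₊ - 1 := Nat.cast_pred (Nat.ceil_pos.mpr hu)
  have hle : u ≤ ⌈u⌉₊ := Nat.le_ceil u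
  have hlt : (⌈u⌉₊ : ℝ) < u + 1 := Nat.ceil_lt_add_one hu.le
  rw [hcast, abs_lt]
  constructor <;> linarith

/-- For every `t ≠ 0` there exists `s ∈ Spec t` with `|s| < 3/2`: the diamagnetic
inequality fails on the round 3-sphere for every nonzero magnetic field `tη`. -/
theorem stmt13 (t : ℝ) (ht : t ≠ 0) : ∃ s ∈ Spec t, |s| < 3 / 2 := by
  rcases ht.lt_or_gt with hneg | hpos
  · obtain ⟨k, hk⟩ := exists_nat_abs_three_halves_add_sub_lt (neg_pos.mpr hneg)
    rw [sub_neg_eq_add] at hk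
    exact ⟨_, three_halves_add_add_mem_Spec t k, hk⟩
  · obtain ⟨k, hk⟩ := exists_nat_abs_three_halves_add_sub_lt hpos
    exact ⟨_, three_halves_add_sub_mem_Spec t k, hk⟩
end
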